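/- arXiv:1002.4473 — 3 statements merged into one kernel-verified Lean document; each statement's English description precedes it below -/
import Mathlib

section
/- Let σθ² > 0, σv² > 0, σn² > 0, λ > 0, and set A = σθ²σv²/(σθ²+σv²), B = σn²σθ²/(σv²(σθ²+σv²)) and b = σn²/(σθ²+σv²). Suppose that for each integer M ≥ 1 the number ν_M > 0 satisfies ∫_{b²ν_M}^∞ (1/√(x·ν_M) − b/x) · M(1−e^{−λx})^{M−1} λ e^{−λx} dx = 1, and define E[D_M] = ∫_{b²ν_M}^∞ A·(1 + B·√(ν_M/x)) · M(1−e^{−λx})^{M−1} λ e^{−λx} dx + σθ²·(1 − e^{−λb²ν_M})^M. Then ln(M)·(E[D_M] − A) → A·B·λ as M → ∞; in particular the expected distortion of the multi-sensor diversity scheme under optimal (water-filling) power allocation has the same asymptotic behaviour A·[1 + B·λ/ln(M)] as under constant power allocation. -/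
/-!
Let `X_M` be the largest of `M` independent `Exp(λ)` gains, `p_M` its density, `c_M = b²ν_M`,
`J_M = ∫_{c_M}^∞ x^{-1/2} p_M` and `K_M = ∫_{c_M}^∞ x^{-1} p_M`. The power constraint reads
`J_M = √ν_M (1 + b K_M)`, and `E[D_M] - A = A B √ν_M J_M + (σθ² - A) P(X_M ≤ c_M)`.

`X_M` concentrates at `ln M / λ`: it lies in `[(ln M - 2 ln ln M)/λ, (ln M + ln ln M)/λ]` with
probability tending to one, and below the left end with probability `≤ 1/M`. Splitting the
integrals there, and bounding `x^{-1} p_M` and `x^{-1/2} p_M` near `0` by multiples of `p_{M-1}`,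
gives `K_M → 0` and `√(ln M) J_M → √λ` once `c_M → 0`, which holds because
`√ν_M ≤ J_M → 0`.
Finally `ln M · P(X_M ≤ c_M) ≤ ln M (λ c_M)² → 0`, and
`ln M (E[D_M] - A) = A B (√(ln M) J_M)² / (1 + b K_M) + o(1) → A B λ`.
-/

open MeasureTheory Filter Real Set Topology

lemma tendsto_log_natCast_atTop : Tendsto (fun M : ℕ => log M) atTop atTop :=
  tendsto_log_atTop.comp tendsto_natCast_atTop_atTop

lemma tendsto_one_add_mul_log_log_div_log (s : ℝ) :
    Tendsto (fun M : ℕ => 1 + s * (log (log M) / log M)) atTop (𝓝 1) := by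
  have h : Tendsto (fun y : ℝ => log y / y) atTop (𝓝 0) := by
    simpa using tendsto_pow_log_div_mul_add_atTop 1 0 1 one_ne_zero
  simpa using ((h.comp tendsto_log_natCast_atTop).const_mul s).const_add 1

lemma le_sq_of_eq_sqrt_mul_one_add {ν J b K : ℝ} (hb : 0 ≤ b) (hK : 0 ≤ K)
    (hJ : J = √ν * (1 + b * K)) : ν ≤ J ^ 2 := by
  have h : √ν ≤ J := hJ ▸ le_mul_of_one_le_right (sqrt_nonneg ν) (by nlinarith)
  exact (sqrt_le_left ((sqrt_nonneg ν).trans h)).1 h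

lemma tendsto_distortion_excess {α : Type*} {l : Filter α} {L ν J K q : α → ℝ}
    {a b d κ lam : ℝ} (hlam : 0 ≤ lam) (hb : 0 ≤ b) (hL : ∀ᶠ i in l, 0 ≤ L i)
    (hν : ∀ᶠ i in l, 0 ≤ ν i)
    (hK : ∀ᶠ i in l, 0 ≤ K i) (hJK : ∀ᶠ i in l, J i = √(ν i) * (1 + b * K i))
    (hq : ∀ᶠ i in l, 0 ≤ q i ∧ q i ≤ (κ * ν i) ^ 2)
    (hLJ : Tendsto (fun i => √(L i) * J i) l (𝓝 (√lam))) (hJ : Tendsto J l (𝓝 0))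
    (hK₀ : Tendsto K l (𝓝 0)) :
    Tendsto (fun i => L i * (a * (√(ν i) * J i) + d * q i)) l (𝓝 (a * lam)) := by
  have hLq : Tendsto (fun i => L i * q i) l (𝓝 0) := by
    have hlim : Tendsto (fun i => κ ^ 2 * ((√(L i) * J i) ^ 2 * J i ^ 2)) l (𝓝 0) := by
      simpa using ((hLJ.pow 2).mul (hJ.pow 2)).const_mul (κ ^ 2)
    refine squeeze_zero' ?_ ?_ hlim
    · filter_upwards [hL, hq] with i hLi hqi using mul_nonneg hLi hqi.1
    · filter_upwards [hL, hν, hq, hK, hJK] with i hLi hνi hqi hKi hJi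
      have hνJ := le_sq_of_eq_sqrt_mul_one_add hb hKi hJi
      calc L i * q i ≤ L i * (κ ^ 2 * (J i ^ 2) ^ 2) := by
            refine mul_le_mul_of_nonneg_left (hqi.2.trans ?_) hLi
            rw [mul_pow]; gcongr
        _ = κ ^ 2 * ((√(L i) * J i) ^ 2 * J i ^ 2) := by rw [mul_pow, sq_sqrt hLi]; ring
  have hmain : Tendsto (fun i => (√(L i) * J i) ^ 2 / (1 + b * K i)) l (𝓝 lam) := by
    simpa [sq_sqrt hlam, Pi.div_def] using
      (hLJ.pow 2).div ((hK₀.const_mul b).const_add 1) (by simp)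
  have h := (hmain.const_mul a).add (hLq.const_mul d)
  rw [mul_zero, add_zero] at h
  refine h.congr' ?_
  filter_upwards [hL, hK, hJK] with i hLi hKi hJi
  have hpos : 0 < 1 + b * K i := by nlinarith
  rw [mul_pow, sq_sqrt hLi, hJi]
  field_simp

namespace MaxExp

/-- Distribution function of the largest of `M` independent `Exp(lam)` channel gains. -/
noncomputable def cdf (lam : ℝ) (M : ℕ) (x : ℝ) : ℝ := (1 - exp (-lam * x)) ^ M

noncomputable def pdf (lam : ℝ) (M : ℕ) (x : ℝ) : ℝ :=
  M * (1 - exp (-lam * x)) ^ (M - 1) * (lam * exp (-lam * x))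

variable {lam : ℝ} {M : ℕ} {x : ℝ}

lemma one_sub_exp_neg_mul_nonneg (hlam : 0 ≤ lam) (hx : 0 ≤ x) : 0 ≤ 1 - exp (-lam * x) := by
  have : exp (-lam * x) ≤ 1 := exp_le_one_iff.2 (by nlinarith)
  linarith

lemma one_sub_exp_neg_mul_le_one : 1 - exp (-lam * x) ≤ 1 := by
  linarith [exp_pos (-lam * x)]

lemma one_sub_exp_neg_mul_le : 1 - exp (-lam * x) ≤ lam * x := by
  linarith [add_one_le_exp (-lam * x)]

lemma hasDerivAt_cdf (lam : ℝ) (M : ℕ) (x : ℝ) : HasDerivAt (cdf lam M) (pdf lam M x) x := by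
  have h : HasDerivAt (fun y => 1 - exp (-lam * y)) (lam * exp (-lam * x)) x := by
    simpa [mul_comm] using ((hasDerivAt_id x).const_mul (-lam)).exp.const_sub 1
  exact h.pow M

lemma continuous_pdf (lam : ℝ) (M : ℕ) : Continuous (pdf lam M) := by
  unfold pdf; fun_prop

lemma pdf_nonneg (hlam : 0 ≤ lam) (M : ℕ) (hx : 0 ≤ x) : 0 ≤ pdf lam M x := by
  have := one_sub_exp_neg_mul_nonneg hlam hx
  unfold pdf; positivity

lemma cdf_nonneg (hlam : 0 ≤ lam) (M : ℕ) (hx : 0 ≤ x) : 0 ≤ cdf lam M x :=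
  pow_nonneg (one_sub_exp_neg_mul_nonneg hlam hx) M

lemma cdf_zero (hM : M ≠ 0) : cdf lam M 0 = 0 := by
  simp [cdf, hM]

lemma cdf_le_cdf_of_le (hlam : 0 ≤ lam) (hx : 0 ≤ x) {m n : ℕ} (hmn : m ≤ n) :
    cdf lam n x ≤ cdf lam m x :=
  pow_le_pow_of_le_one (one_sub_exp_neg_mul_nonneg hlam hx) one_sub_exp_neg_mul_le_one hmn

lemma cdf_le_one (hlam : 0 ≤ lam) (M : ℕ) (hx : 0 ≤ x) : cdf lam M x ≤ 1 := by
  simpa [cdf] using cdf_le_cdf_of_le hlam hx (Nat.zero_le M)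

lemma cdf_le_sq (hlam : 0 ≤ lam) (hM : 2 ≤ M) (hx : 0 ≤ x) : cdf lam M x ≤ (lam * x) ^ 2 :=
  (cdf_le_cdf_of_le hlam hx hM).trans
    (pow_le_pow_left₀ (one_sub_exp_neg_mul_nonneg hlam hx) one_sub_exp_neg_mul_le 2)

lemma cdf_le_exp (hlam : 0 ≤ lam) (n : ℕ) (hx : 0 ≤ x) :
    cdf lam n x ≤ exp (-(n * exp (-lam * x))) := by
  calc cdf lam n x ≤ exp (-exp (-lam * x)) ^ n :=
        pow_le_pow_left₀ (one_sub_exp_neg_mul_nonneg hlam hx) (one_sub_le_exp_neg _) n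
    _ = exp (-(n * exp (-lam * x))) := by rw [← exp_nat_mul, mul_neg]

lemma one_sub_mul_exp_le_cdf (hlam : 0 ≤ lam) (n : ℕ) (hx : 0 ≤ x) :
    1 - n * exp (-lam * x) ≤ cdf lam n x := by
  have : exp (-lam * x) ≤ 1 := exp_le_one_iff.2 (by nlinarith)
  simpa [cdf, sub_eq_add_neg] using one_add_mul_le_pow (a := -exp (-lam * x)) (by linarith) n

lemma tendsto_cdf_atTop (hlam : 0 < lam) (M : ℕ) : Tendsto (cdf lam M) atTop (𝓝 1) := by
  have h : Tendsto (fun x => exp (-lam * x)) atTop (𝓝 0) :=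
    tendsto_exp_atBot.comp (tendsto_id.const_mul_atTop_of_neg (neg_neg_iff_pos.2 hlam))
  show Tendsto (fun x => (1 - exp (-lam * x)) ^ M) atTop (𝓝 1)
  simpa using (h.const_sub 1).pow M

lemma pdf_le (hlam : 0 ≤ lam) (M : ℕ) (hx : 0 ≤ x) :
    pdf lam M x ≤ M * lam * exp (-lam * x) := by
  have h := pow_le_one₀ (n := M - 1) (one_sub_exp_neg_mul_nonneg hlam hx)
    one_sub_exp_neg_mul_le_one
  have : 0 ≤ M * (lam * exp (-lam * x)) := by positivity
  calc pdf lam M x = (1 - exp (-lam * x)) ^ (M - 1) * (M * (lam * exp (-lam * x))) := by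
        unfold pdf; ring
    _ ≤ M * lam * exp (-lam * x) := by nlinarith

lemma integrableOn_pdf (hlam : 0 < lam) (M : ℕ) {T : ℝ} (hT : 0 ≤ T) :
    IntegrableOn (pdf lam M) (Ioi T) := by
  refine ((exp_neg_integrableOn_Ioi T hlam).const_mul (M * lam)).mono'
    (continuous_pdf lam M).aestronglyMeasurable ?_
  filter_upwards [self_mem_ae_restrict measurableSet_Ioi] with x hx
  have hx0 : 0 ≤ x := hT.trans hx.le
  rw [norm_of_nonneg (pdf_nonneg hlam.le M hx0)]
  exact pdf_le hlam.le M hx0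

lemma integral_pdf_Ioi (hlam : 0 < lam) (M : ℕ) {T : ℝ} (hT : 0 ≤ T) :
    ∫ x in Ioi T, pdf lam M x = 1 - cdf lam M T :=
  integral_Ioi_of_hasDerivAt_of_tendsto' (fun x _ => hasDerivAt_cdf lam M x)
    (integrableOn_pdf hlam M hT) (tendsto_cdf_atTop hlam M)

lemma integral_pdf_Ioc (lam : ℝ) (M : ℕ) {a b : ℝ} (hab : a ≤ b) :
    ∫ x in Ioc a b, pdf lam M x = cdf lam M b - cdf lam M a := by
  rw [← intervalIntegral.integral_of_le hab]
  exact intervalIntegral.integral_eq_sub_of_hasDerivAt (fun x _ => hasDerivAt_cdf lam M x)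
    ((continuous_pdf lam M).intervalIntegrable a b)

lemma sub_one_mul_pdf (hM : 2 ≤ M) (x : ℝ) :
    ((M : ℝ) - 1) * pdf lam M x = M * (1 - exp (-lam * x)) * pdf lam (M - 1) x := by
  obtain ⟨n, rfl⟩ := Nat.exists_eq_add_of_le' hM
  simp only [pdf, Nat.cast_add, Nat.cast_ofNat]
  rw [show n + 2 - 1 = n + 1 by omega]
  push_cast
  ring

/-- The bound `w x * (1 - exp (-lam * x)) ≤ C` absorbs the singularity of `w` at `0` into one
factor of the distribution function, giving `w * pdf lam M ≤ 2 * C * pdf lam (M - 1)`. -/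
structure AdmissibleWeight (lam C : ℝ) (w : ℝ → ℝ) : Prop where
  measurable : Measurable w
  nonneg : ∀ x, 0 < x → 0 ≤ w x
  antitoneOn : AntitoneOn w (Ioi 0)
  mul_one_sub_exp_le : ∀ x, 0 < x → w x * (1 - exp (-lam * x)) ≤ C

lemma admissibleWeight_inv (lam : ℝ) : AdmissibleWeight lam lam (fun x => x⁻¹) where
  measurable := measurable_inv
  nonneg _ hx := inv_nonneg.2 hx.le
  antitoneOn _ hx _ _ hxy := inv_anti₀ hx hxy
  mul_one_sub_exp_le x hx := by
    rw [inv_mul_le_iff₀ hx]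
    linarith [one_sub_exp_neg_mul_le (lam := lam) (x := x)]

lemma admissibleWeight_inv_sqrt (hlam : 0 ≤ lam) :
    AdmissibleWeight lam (√lam) (fun x => (√x)⁻¹) where
  measurable := continuous_sqrt.measurable.inv
  nonneg _ _ := inv_nonneg.2 (sqrt_nonneg _)
  antitoneOn _ hx _ _ hxy := inv_anti₀ (sqrt_pos.2 hx) (sqrt_le_sqrt hxy)
  mul_one_sub_exp_le x hx := by
    have hu₀ := one_sub_exp_neg_mul_nonneg hlam hx.le
    have hu₁ := one_sub_exp_neg_mul_le_one (lam := lam) (x := x)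
    have hu : 1 - exp (-lam * x) ≤ √lam * √x := by
      rw [← sqrt_mul hlam, le_sqrt hu₀ (by positivity)]
      nlinarith [one_sub_exp_neg_mul_le (lam := lam) (x := x)]
    rw [inv_mul_le_iff₀ (sqrt_pos.2 hx)]
    linarith

namespace AdmissibleWeight

variable {C : ℝ} {w : ℝ → ℝ}

lemma mul_pdf_le (hw : AdmissibleWeight lam C w) (hlam : 0 ≤ lam) (hM : 2 ≤ M) (hx : 0 < x) :
    w x * pdf lam M x ≤ 2 * C * pdf lam (M - 1) x := by
  have hp := pdf_nonneg hlam (M - 1) hx.le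
  have hwu := hw.mul_one_sub_exp_le x hx
  have hC : 0 ≤ C :=
    (mul_nonneg (hw.nonneg x hx) (one_sub_exp_neg_mul_nonneg hlam hx.le)).trans hwu
  have hM' : (2 : ℝ) ≤ M := by exact_mod_cast hM
  refine le_of_mul_le_mul_left ?_ (by linarith : (0 : ℝ) < M - 1)
  calc ((M : ℝ) - 1) * (w x * pdf lam M x)
      = M * (w x * (1 - exp (-lam * x))) * pdf lam (M - 1) x := by
        rw [mul_left_comm, sub_one_mul_pdf hM]; ring
    _ ≤ M * C * pdf lam (M - 1) x := by gcongr
    _ ≤ ((M : ℝ) - 1) * (2 * C * pdf lam (M - 1) x) := by nlinarith [mul_nonneg hC hp]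

lemma integrableOn (hw : AdmissibleWeight lam C w) (hlam : 0 < lam) (hM : 2 ≤ M) :
    IntegrableOn (fun x => w x * pdf lam M x) (Ioi 0) := by
  refine ((integrableOn_pdf hlam (M - 1) le_rfl).const_mul (2 * C)).mono'
    (hw.measurable.mul (continuous_pdf lam M).measurable).aestronglyMeasurable ?_
  filter_upwards [self_mem_ae_restrict measurableSet_Ioi] with x hx
  rw [norm_of_nonneg (mul_nonneg (hw.nonneg x hx) (pdf_nonneg hlam.le M (le_of_lt hx)))]
  exact hw.mul_pdf_le hlam.le hM hx

lemma setIntegral_nonneg (hw : AdmissibleWeight lam C w) (hlam : 0 ≤ lam) (M : ℕ) {c : ℝ}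
    (hc : 0 ≤ c) : 0 ≤ ∫ x in Ioi c, w x * pdf lam M x :=
  MeasureTheory.setIntegral_nonneg measurableSet_Ioi fun x hx =>
    mul_nonneg (hw.nonneg x (hc.trans_lt hx)) (pdf_nonneg hlam M (hc.trans (le_of_lt hx)))

lemma setIntegral_le (hw : AdmissibleWeight lam C w) (hlam : 0 < lam) (hM : 2 ≤ M) {c T : ℝ}
    (hc : 0 ≤ c) (hT : 0 < T) :
    ∫ x in Ioi c, w x * pdf lam M x ≤ 2 * C * cdf lam (M - 1) T + w T := by
  have hint := hw.integrableOn hlam hM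
  have hnonneg : 0 ≤ᵐ[volume.restrict (Ioi 0)] fun x => w x * pdf lam M x := by
    filter_upwards [self_mem_ae_restrict measurableSet_Ioi] with x hx
    exact mul_nonneg (hw.nonneg x hx) (pdf_nonneg hlam.le M (le_of_lt hx))
  have hhead :
      ∫ x in Ioc 0 T, w x * pdf lam M x ≤ ∫ x in Ioc 0 T, 2 * C * pdf lam (M - 1) x :=
    setIntegral_mono_on (hint.mono_set Ioc_subset_Ioi_self)
      ((continuous_pdf lam (M - 1)).integrableOn_Ioc.const_mul _) measurableSet_Ioc
      fun x hx => hw.mul_pdf_le hlam.le hM hx.1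
  have htail : ∫ x in Ioi T, w x * pdf lam M x ≤ ∫ x in Ioi T, w T * pdf lam M x :=
    setIntegral_mono_on (hint.mono_set (Ioi_subset_Ioi hT.le))
      ((integrableOn_pdf hlam M hT.le).const_mul _) measurableSet_Ioi fun x hx =>
        mul_le_mul_of_nonneg_right (hw.antitoneOn hT (hT.trans hx) (le_of_lt hx))
          (pdf_nonneg hlam.le M (hT.trans hx).le)
  rw [integral_const_mul, integral_pdf_Ioc lam _ hT.le, cdf_zero (by omega), sub_zero] at hhead
  rw [integral_const_mul, integral_pdf_Ioi hlam M hT.le] at htail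
  have hwT : w T * (1 - cdf lam M T) ≤ w T :=
    mul_le_of_le_one_right (hw.nonneg T hT) (by linarith [cdf_nonneg hlam.le M hT.le])
  calc ∫ x in Ioi c, w x * pdf lam M x ≤ ∫ x in Ioi 0, w x * pdf lam M x :=
        setIntegral_mono_set hint hnonneg (Ioi_subset_Ioi hc).eventuallyLE
    _ = (∫ x in Ioc 0 T, w x * pdf lam M x) + ∫ x in Ioi T, w x * pdf lam M x := by
        rw [← Ioc_union_Ioi_eq_Ioi hT.le, setIntegral_union (Ioc_disjoint_Ioi le_rfl)
          measurableSet_Ioi (hint.mono_set Ioc_subset_Ioi_self)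
          (hint.mono_set (Ioi_subset_Ioi hT.le))]
    _ ≤ 2 * C * cdf lam (M - 1) T + w T := by linarith

lemma le_setIntegral (hw : AdmissibleWeight lam C w) (hlam : 0 < lam) (hM : 2 ≤ M)
    {c a b : ℝ} (hc : 0 ≤ c) (hca : c ≤ a) (ha : 0 < a) (hab : a ≤ b) :
    w b * (cdf lam M b - cdf lam M a) ≤ ∫ x in Ioi c, w x * pdf lam M x := by
  have hint := (hw.integrableOn hlam hM).mono_set (Ioi_subset_Ioi hc)
  calc w b * (cdf lam M b - cdf lam M a) = ∫ x in Ioc a b, w b * pdf lam M x := by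
        rw [integral_const_mul, integral_pdf_Ioc lam M hab]
    _ ≤ ∫ x in Ioc a b, w x * pdf lam M x :=
        setIntegral_mono_on ((continuous_pdf lam M).integrableOn_Ioc.const_mul _)
          (hint.mono_set fun x hx => hca.trans_lt hx.1) measurableSet_Ioc fun x hx =>
            mul_le_mul_of_nonneg_right (hw.antitoneOn (ha.trans hx.1) (ha.trans_le hab) hx.2)
              (pdf_nonneg hlam.le M (ha.trans hx.1).le)
    _ ≤ ∫ x in Ioi c, w x * pdf lam M x := by
        refine setIntegral_mono_set hint ?_ (Eventually.of_forall fun x hx => hca.trans_lt hx.1)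
        filter_upwards [self_mem_ae_restrict measurableSet_Ioi] with x hx
        exact mul_nonneg (hw.nonneg x (hc.trans_lt hx)) (pdf_nonneg hlam.le M (hc.trans hx.le))

end AdmissibleWeight

/-- For large `M`, the maximum of `M` gains lies below `cutoff lam (-2) M` with probability at
most `1 / M`, and below `cutoff lam 1 M` with probability at least `1 - 1 / log M`. -/
noncomputable def cutoff (lam s : ℝ) (M : ℕ) : ℝ := (log M + s * log (log M)) / lam

variable {s : ℝ}

lemma cutoff_eq (hL : log M ≠ 0) :
    cutoff lam s M = log M * (1 + s * (log (log M) / log M)) / lam := by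
  unfold cutoff; field_simp

lemma cutoff_le_cutoff (hlam : 0 < lam) {t : ℝ} (hst : s ≤ t) (hL : 1 ≤ log M) :
    cutoff lam s M ≤ cutoff lam t M :=
  div_le_div_of_nonneg_right (by nlinarith [log_nonneg hL]) hlam.le

lemma tendsto_cutoff_atTop (hlam : 0 < lam) (s : ℝ) : Tendsto (cutoff lam s) atTop atTop := by
  refine ((tendsto_log_natCast_atTop.atTop_mul_pos one_pos
    (tendsto_one_add_mul_log_log_div_log s)).atTop_div_const hlam).congr' ?_
  filter_upwards [tendsto_log_natCast_atTop.eventually_gt_atTop 0] with M hM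
  rw [cutoff_eq hM.ne']

lemma tendsto_log_div_cutoff (lam s : ℝ) :
    Tendsto (fun M : ℕ => log M / cutoff lam s M) atTop (𝓝 lam) := by
  have h := ((tendsto_one_add_mul_log_log_div_log s).inv₀ one_ne_zero).const_mul lam
  rw [inv_one, mul_one] at h
  refine h.congr' ?_
  filter_upwards [tendsto_log_natCast_atTop.eventually_gt_atTop 0] with M hM
  rw [cutoff_eq hM.ne', div_div_eq_mul_div, mul_div_mul_left _ _ hM.ne', ← div_eq_mul_inv]

lemma tendsto_sqrt_log_mul_inv_sqrt_cutoff (lam s : ℝ) :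
    Tendsto (fun M : ℕ => √(log M) * (√(cutoff lam s M))⁻¹) atTop (𝓝 (√lam)) := by
  refine ((continuous_sqrt.tendsto lam).comp (tendsto_log_div_cutoff lam s)).congr fun M => ?_
  rw [Function.comp_apply, sqrt_div (log_natCast_nonneg M), div_eq_mul_inv]

lemma mul_exp_neg_mul_cutoff (hlam : lam ≠ 0) (hM : 0 < M) :
    M * exp (-lam * cutoff lam s M) = exp (-(s * log (log M))) := by
  have hM' : (0 : ℝ) < M := by exact_mod_cast hM
  have h : -lam * cutoff lam s M = -log M + -(s * log (log M)) := by
    unfold cutoff; field_simp; ring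
  rw [h, exp_add, exp_neg (log M), exp_log hM', ← mul_assoc, mul_inv_cancel₀ hM'.ne', one_mul]

lemma tendsto_cdf_cutoff_one (hlam : 0 < lam) :
    Tendsto (fun M : ℕ => cdf lam M (cutoff lam 1 M)) atTop (𝓝 1) := by
  have hlow : Tendsto (fun M : ℕ => 1 - exp (-(1 * log (log M)))) atTop (𝓝 1) := by
    simpa using (tendsto_exp_atBot.comp (tendsto_neg_atTop_atBot.comp
      (tendsto_log_atTop.comp tendsto_log_natCast_atTop))).const_sub 1
  refine tendsto_of_tendsto_of_tendsto_of_le_of_le' hlow tendsto_const_nhds ?_ ?_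
  all_goals filter_upwards [(tendsto_cutoff_atTop hlam 1).eventually_ge_atTop 0,
    eventually_gt_atTop 0] with M hT hM
  · rw [← mul_exp_neg_mul_cutoff hlam.ne' hM]
    exact one_sub_mul_exp_le_cdf hlam.le M hT
  · exact cdf_le_one hlam.le M hT

lemma cdf_pred_cutoff_le (hlam : 0 < lam) :
    ∀ᶠ M : ℕ in atTop, cdf lam (M - 1) (cutoff lam (-2) M) ≤ exp (-log M) := by
  filter_upwards [(tendsto_cutoff_atTop hlam (-2)).eventually_ge_atTop 0,
    tendsto_log_natCast_atTop.eventually_ge_atTop 2, eventually_ge_atTop 2] with M hT hL hM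
  refine (cdf_le_exp hlam.le (M - 1) hT).trans (exp_le_exp.2 (neg_le_neg ?_))
  have hsq : M * exp (-lam * cutoff lam (-2) M) = log M ^ 2 := by
    rw [mul_exp_neg_mul_cutoff hlam.ne' (by omega), neg_mul, neg_neg,
      show (2 : ℝ) * log (log M) = ((2 : ℕ) : ℝ) * log (log M) by norm_num, exp_nat_mul,
      exp_log (by linarith)]
  have hM' : (2 : ℝ) ≤ M := by exact_mod_cast hM
  rw [Nat.cast_sub (by omega), Nat.cast_one]
  nlinarith [exp_pos (-lam * cutoff lam (-2) M)]

lemma tendsto_cdf_pred_cutoff (hlam : 0 < lam) :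
    Tendsto (fun M : ℕ => cdf lam (M - 1) (cutoff lam (-2) M)) atTop (𝓝 0) := by
  refine squeeze_zero' ?_ (cdf_pred_cutoff_le hlam)
    (tendsto_exp_atBot.comp (tendsto_neg_atTop_atBot.comp tendsto_log_natCast_atTop))
  filter_upwards [(tendsto_cutoff_atTop hlam (-2)).eventually_ge_atTop 0] with M hT
  exact cdf_nonneg hlam.le _ hT

lemma tendsto_cdf_cutoff_neg_two (hlam : 0 < lam) :
    Tendsto (fun M : ℕ => cdf lam M (cutoff lam (-2) M)) atTop (𝓝 0) := by
  refine squeeze_zero' ?_ ?_ (tendsto_cdf_pred_cutoff hlam)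
  all_goals filter_upwards [(tendsto_cutoff_atTop hlam (-2)).eventually_ge_atTop 0] with M hT
  · exact cdf_nonneg hlam.le _ hT
  · exact cdf_le_cdf_of_le hlam.le hT (Nat.sub_le M 1)

lemma tendsto_sqrt_log_mul_cdf_pred_cutoff (hlam : 0 < lam) :
    Tendsto (fun M : ℕ => √(log M) * cdf lam (M - 1) (cutoff lam (-2) M)) atTop (𝓝 0) := by
  have h : Tendsto (fun y : ℝ => √y * exp (-y)) atTop (𝓝 0) := by
    simpa [sqrt_eq_rpow] using tendsto_rpow_mul_exp_neg_mul_atTop_nhds_zero (1 / 2) 1 one_pos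
  refine squeeze_zero' ?_ ?_ (h.comp tendsto_log_natCast_atTop)
  · filter_upwards [(tendsto_cutoff_atTop hlam (-2)).eventually_ge_atTop 0] with M hT
    exact mul_nonneg (sqrt_nonneg _) (cdf_nonneg hlam.le _ hT)
  · filter_upwards [cdf_pred_cutoff_le hlam] with M hM
    exact mul_le_mul_of_nonneg_left hM (sqrt_nonneg _)

lemma AdmissibleWeight.tendsto_setIntegral_zero {C : ℝ} {w : ℝ → ℝ}
    (hw : AdmissibleWeight lam C w) (hlam : 0 < lam) (hw₀ : Tendsto w atTop (𝓝 0))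
    {c : ℕ → ℝ} (hc : ∀ᶠ M in atTop, 0 ≤ c M) :
    Tendsto (fun M => ∫ x in Ioi (c M), w x * pdf lam M x) atTop (𝓝 0) := by
  have hT := tendsto_cutoff_atTop hlam (-2)
  have hbound : Tendsto (fun M => 2 * C * cdf lam (M - 1) (cutoff lam (-2) M) +
      w (cutoff lam (-2) M)) atTop (𝓝 0) := by
    simpa using ((tendsto_cdf_pred_cutoff hlam).const_mul (2 * C)).add (hw₀.comp hT)
  refine squeeze_zero' ?_ ?_ hbound
  · filter_upwards [hc] with M hM using hw.setIntegral_nonneg hlam.le M hM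
  · filter_upwards [hc, eventually_ge_atTop 2, hT.eventually_gt_atTop 0] with M hcM hM hTM
    exact hw.setIntegral_le hlam hM hcM hTM

lemma tendsto_sqrt_log_mul_setIntegral_inv_sqrt_mul_pdf (hlam : 0 < lam) {c : ℕ → ℝ}
    (hc₀ : ∀ᶠ M in atTop, 0 ≤ c M) (hc : Tendsto c atTop (𝓝 0)) :
    Tendsto (fun M : ℕ => √(log M) * ∫ x in Ioi (c M), (√x)⁻¹ * pdf lam M x)
      atTop (𝓝 (√lam)) := by
  have hw := admissibleWeight_inv_sqrt hlam.le
  have hT := tendsto_cutoff_atTop hlam (-2)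
  have hlower : Tendsto (fun M : ℕ => √(log M) * (√(cutoff lam 1 M))⁻¹ *
      (cdf lam M (cutoff lam 1 M) - cdf lam M (cutoff lam (-2) M))) atTop (𝓝 (√lam)) := by
    simpa using (tendsto_sqrt_log_mul_inv_sqrt_cutoff lam 1).mul
      ((tendsto_cdf_cutoff_one hlam).sub (tendsto_cdf_cutoff_neg_two hlam))
  have hupper : Tendsto (fun M : ℕ =>
      2 * √lam * (√(log M) * cdf lam (M - 1) (cutoff lam (-2) M)) +
        √(log M) * (√(cutoff lam (-2) M))⁻¹) atTop (𝓝 (√lam)) := by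
    simpa using ((tendsto_sqrt_log_mul_cdf_pred_cutoff hlam).const_mul (2 * √lam)).add
      (tendsto_sqrt_log_mul_inv_sqrt_cutoff lam (-2))
  refine tendsto_of_tendsto_of_tendsto_of_le_of_le' hlower hupper ?_ ?_
  · filter_upwards [hc₀, hc.eventually (gt_mem_nhds one_pos), hT.eventually_ge_atTop 1,
      tendsto_log_natCast_atTop.eventually_ge_atTop 1, eventually_ge_atTop 2]
      with M hc₀M hcM hTM hL hM
    rw [mul_assoc]
    exact mul_le_mul_of_nonneg_left (hw.le_setIntegral hlam hM hc₀M (by linarith)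
      (by linarith) (cutoff_le_cutoff hlam (by norm_num) hL)) (sqrt_nonneg _)
  · filter_upwards [hc₀, hT.eventually_gt_atTop 0, eventually_ge_atTop 2] with M hc₀M hTM hM
    have h := mul_le_mul_of_nonneg_left (hw.setIntegral_le hlam hM hc₀M hTM)
      (sqrt_nonneg (log M))
    linarith

end MaxExp

open MaxExp

lemma setIntegral_inv_sqrt_mul_pdf_eq_of_power {lam : ℝ} (hlam : 0 < lam) {M : ℕ} (hM : 2 ≤ M)
    {c ν b : ℝ} (hc : 0 ≤ c) (hν : 0 < ν)
    (hpower : ∫ x in Ioi c, (1 / √(x * ν) - b / x) * pdf lam M x = 1) :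
    ∫ x in Ioi c, (√x)⁻¹ * pdf lam M x =
      √ν * (1 + b * ∫ x in Ioi c, x⁻¹ * pdf lam M x) := by
  have hJ := ((admissibleWeight_inv_sqrt hlam.le).integrableOn hlam hM).mono_set
    (Ioi_subset_Ioi hc)
  have hK := ((admissibleWeight_inv lam).integrableOn hlam hM).mono_set (Ioi_subset_Ioi hc)
  have h : ∫ x in Ioi c, (1 / √(x * ν) - b / x) * pdf lam M x =
      (√ν)⁻¹ * (∫ x in Ioi c, (√x)⁻¹ * pdf lam M x) -
        b * ∫ x in Ioi c, x⁻¹ * pdf lam M x := by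
    rw [← integral_const_mul, ← integral_const_mul, ← integral_sub (hJ.const_mul _)
      (hK.const_mul _)]
    refine setIntegral_congr_fun measurableSet_Ioi fun x hx => ?_
    rw [sqrt_mul (hc.trans (le_of_lt hx)) ν]
    ring
  rw [← mul_inv_cancel_left₀ (sqrt_pos.2 hν).ne' (∫ x in Ioi c, (√x)⁻¹ * pdf lam M x)]
  congr 1
  linarith

lemma setIntegral_distortion_eq {lam : ℝ} (hlam : 0 < lam) {M : ℕ} (hM : 2 ≤ M) {c : ℝ}
    (hc : 0 ≤ c) (ν A B : ℝ) :
    ∫ x in Ioi c, A * (1 + B * √(ν / x)) * pdf lam M x =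
      A * (1 - cdf lam M c) + A * B * √ν * ∫ x in Ioi c, (√x)⁻¹ * pdf lam M x := by
  have hJ := ((admissibleWeight_inv_sqrt hlam.le).integrableOn hlam hM).mono_set
    (Ioi_subset_Ioi hc)
  rw [← integral_pdf_Ioi hlam M hc, ← integral_const_mul, ← integral_const_mul,
    ← integral_add ((integrableOn_pdf hlam M hc).const_mul _) (hJ.const_mul _)]
  refine setIntegral_congr_fun measurableSet_Ioi fun x hx => ?_
  rw [sqrt_div' ν (hc.trans (le_of_lt hx))]
  ring

theorem diversity_optimal_power_asymptotics_general (sθ sv sn lam : ℝ)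
    (hθ : 0 < sθ) (hv : 0 < sv) (hn : 0 < sn) (hlam : 0 < lam)
    (A B b : ℝ)
    (hb : b = sn / (sθ + sv))
    (ν : ℕ → ℝ) (hν : ∀ M : ℕ, 1 ≤ M → 0 < ν M)
    (hpower : ∀ M : ℕ, 1 ≤ M →
      (∫ x in Set.Ioi (b ^ 2 * ν M),
          (1 / Real.sqrt (x * ν M) - b / x) *
            ((M : ℝ) * (1 - Real.exp (-lam * x)) ^ (M - 1)
              * (lam * Real.exp (-lam * x)))) = 1)
    (ED : ℕ → ℝ)
    (hED : ∀ M : ℕ, 1 ≤ M →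
      ED M = (∫ x in Set.Ioi (b ^ 2 * ν M),
          (A * (1 + B * Real.sqrt (ν M / x))) *
            ((M : ℝ) * (1 - Real.exp (-lam * x)) ^ (M - 1)
              * (lam * Real.exp (-lam * x))))
        + sθ * (1 - Real.exp (-lam * (b ^ 2 * ν M))) ^ M) :
    Tendsto (fun M : ℕ => Real.log M * (ED M - A)) atTop (nhds (A * B * lam)) := by
  have hb₀ : 0 ≤ b := hb ▸ by positivity
  have hν₀ : ∀ᶠ M in atTop, 0 ≤ ν M :=
    (eventually_ge_atTop 1).mono fun M hM => (hν M hM).le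
  have hc₀ : ∀ᶠ M in atTop, 0 ≤ b ^ 2 * ν M := hν₀.mono fun M h => by positivity
  have hJ := (admissibleWeight_inv_sqrt hlam.le).tendsto_setIntegral_zero hlam
    (tendsto_inv_atTop_zero.comp tendsto_sqrt_atTop) hc₀
  have hK := (admissibleWeight_inv lam).tendsto_setIntegral_zero hlam tendsto_inv_atTop_zero hc₀
  have hK₀ := hc₀.mono fun M h => (admissibleWeight_inv lam).setIntegral_nonneg hlam.le M h
  have hJK : ∀ᶠ M in atTop, ∫ x in Ioi (b ^ 2 * ν M), (√x)⁻¹ * pdf lam M x =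
      √(ν M) * (1 + b * ∫ x in Ioi (b ^ 2 * ν M), x⁻¹ * pdf lam M x) := by
    filter_upwards [eventually_ge_atTop 2, hc₀] with M hM hcM
    exact setIntegral_inv_sqrt_mul_pdf_eq_of_power hlam hM hcM (hν M (by omega))
      (hpower M (by omega))
  have hνlim : Tendsto ν atTop (𝓝 0) := squeeze_zero' hν₀
    (by filter_upwards [hK₀, hJK] with M hK hJ using le_sq_of_eq_sqrt_mul_one_add hb₀ hK hJ)
    (by simpa using hJ.pow 2)
  have hLJ := tendsto_sqrt_log_mul_setIntegral_inv_sqrt_mul_pdf hlam hc₀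
    (by simpa using hνlim.const_mul (b ^ 2))
  have hq : ∀ᶠ M in atTop, 0 ≤ cdf lam M (b ^ 2 * ν M) ∧
      cdf lam M (b ^ 2 * ν M) ≤ (lam * b ^ 2 * ν M) ^ 2 := by
    filter_upwards [hc₀, eventually_ge_atTop 2] with M hcM hM
    exact ⟨cdf_nonneg hlam.le M hcM, by simpa only [mul_assoc] using cdf_le_sq hlam.le hM hcM⟩
  refine (tendsto_distortion_excess (a := A * B) (d := sθ - A) hlam.le hb₀
    (Eventually.of_forall fun M => log_natCast_nonneg M) hν₀ hK₀ hJK hq hLJ hJ hK).congr' ?_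
  filter_upwards [eventually_ge_atTop 2, hc₀] with M hM hcM
  rw [(hED M (by omega)).trans
    (congrArg (· + _) (setIntegral_distortion_eq hlam hM hcM (ν M) A B))]
  unfold cdf
  ring

/-- The expected distortion of the multi-sensor diversity scheme under optimal
water-filling power allocation has the same asymptotics as under constant power
allocation: with `A = σθ²σv²/(σθ²+σv²)`, `B = σn²σθ²/(σv²(σθ²+σv²))`,
`b = σn²/(σθ²+σv²)`, Lagrange multipliers `ν_M` determined by the unit power
constraint, and
`E[D_M] = ∫_{b²ν_M}^∞ A(1 + B√(ν_M/x)) p_M(x) dx + σθ²(1-e^{-λb²ν_M})^M`,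
one has `ln(M)·(E[D_M] − A) → A·B·λ` as `M → ∞`. -/
theorem diversity_optimal_power_asymptotics (sθ sv sn lam : ℝ)
    (hθ : 0 < sθ) (hv : 0 < sv) (hn : 0 < sn) (hlam : 0 < lam)
    (A B b : ℝ) (hA : A = sθ * sv / (sθ + sv))
    (hB : B = sn * sθ / (sv * (sθ + sv)))
    (hb : b = sn / (sθ + sv))
    (ν : ℕ → ℝ) (hν : ∀ M : ℕ, 1 ≤ M → 0 < ν M)
    (hpower : ∀ M : ℕ, 1 ≤ M →
      (∫ x in Set.Ioi (b ^ 2 * ν M),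
          (1 / Real.sqrt (x * ν M) - b / x) *
            ((M : ℝ) * (1 - Real.exp (-lam * x)) ^ (M - 1)
              * (lam * Real.exp (-lam * x)))) = 1)
    (ED : ℕ → ℝ)
    (hED : ∀ M : ℕ, 1 ≤ M →
      ED M = (∫ x in Set.Ioi (b ^ 2 * ν M),
          (A * (1 + B * Real.sqrt (ν M / x))) *
            ((M : ℝ) * (1 - Real.exp (-lam * x)) ^ (M - 1)
              * (lam * Real.exp (-lam * x))))
        + sθ * (1 - Real.exp (-lam * (b ^ 2 * ν M))) ^ M) :
    Tendsto (fun M : ℕ => Real.log M * (ED M - A)) atTop (nhds (A * B * lam)) :=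
  diversity_optimal_power_asymptotics_general sθ sv sn lam hθ hv hn hlam A B b hb ν hν hpower ED hED
end

section
/- Let λ > 0 and b > 0, and for each integer M ≥ 1 set T_M = (1/λ)ln(M). Suppose ν_M > 0 satisfies ∫_{max(T_M, b²ν_M)}^∞ (1/√(x·ν_M) − b/x) · λ e^{−λx} dx = 1/M. Then ν_M ≤ λπ for every M, and consequently there exists M₀ such that T_M > b²·ν_M for all M ≥ M₀. -/
open MeasureTheory Filter Real

/-!
For `M ≥ 2` the threshold `T = log M / λ` is positive, and on the integration range `x > T` the
integrand is at most `(T ν)^{-1/2}` times the exponential density, whose tail beyond `T` has mass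
exactly `e^{-λT} = 1/M`; the power constraint therefore forces `T ν ≤ 1`, i.e. `ν ≤ λ / log M`,
and `λ / log 2 < λπ`. For `M = 1` the threshold is `0`, and the integrand is instead dominated by
`λ ν^{-1/2} x^{-1/2} e^{-λx}`, whose integral over `(0, ∞)` is `Γ(1/2) √(λ/ν) = √(λπ/ν)`;
the constraint `= 1` gives `ν ≤ λπ`. Finally `T_M → ∞` while `b²ν_M ≤ b²/T_M`.
-/

/-- The integrand `α*(x) · λe^{-λx}` of the power constraint, with `ν` the multiplier. -/
noncomputable def alohaPowerDensity (lam b ν x : ℝ) : ℝ :=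
  (1 / √(x * ν) - b / x) * (lam * exp (-lam * x))

lemma setIntegral_le_of_le_of_nonneg {X : Type*} [MeasurableSpace X] {μ : Measure X}
    {f g : X → ℝ} {s : Set X} (hs : MeasurableSet s) (hg : IntegrableOn g s μ)
    (hg₀ : ∀ x ∈ s, 0 ≤ g x) (hfg : ∀ x ∈ s, f x ≤ g x) :
    ∫ x in s, f x ∂μ ≤ ∫ x in s, g x ∂μ := by
  by_cases hf : IntegrableOn f s μ
  · exact setIntegral_mono_on hf hg hs hfg
  · rw [integral_undef hf]
    exact setIntegral_nonneg hs hg₀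

lemma integral_Ioi_mul_exp_neg_mul {lam : ℝ} (hlam : 0 < lam) (c : ℝ) :
    ∫ x in Set.Ioi c, lam * exp (-lam * x) = exp (-lam * c) := by
  rw [integral_const_mul, integral_exp_mul_Ioi (neg_lt_zero.mpr hlam)]
  field_simp

lemma integral_Ioi_zero_rpow_neg_half_mul_exp_neg_mul {lam : ℝ} (hlam : 0 < lam) :
    ∫ x in Set.Ioi 0, x ^ (-(1 / 2) : ℝ) * exp (-lam * x) = √(π / lam) := by
  have h := integral_rpow_mul_exp_neg_mul_Ioi one_half_pos hlam
  simp only [neg_mul]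
  rw [show (-(1 / 2) : ℝ) = 1 / 2 - 1 by norm_num, h, Gamma_one_half_eq, ← sqrt_eq_rpow,
    ← sqrt_mul (by positivity), one_div_mul_eq_div]

lemma alohaPowerDensity_le_of_le {lam b ν T x : ℝ} (hlam : 0 < lam) (hb : 0 ≤ b) (hT : 0 < T)
    (hν : 0 < ν) (hTx : T ≤ x) :
    alohaPowerDensity lam b ν x ≤ (√(T * ν))⁻¹ * (lam * exp (-lam * x)) := by
  have hx : 0 < x := hT.trans_le hTx
  have h_sqrt : (√(x * ν))⁻¹ ≤ (√(T * ν))⁻¹ :=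
    inv_anti₀ (by positivity) (sqrt_le_sqrt (by nlinarith))
  unfold alohaPowerDensity
  gcongr
  rw [one_div]
  linarith [div_nonneg hb hx.le]

lemma alohaPowerDensity_le_rpow {lam b ν x : ℝ} (hlam : 0 ≤ lam) (hb : 0 ≤ b) (hx : 0 < x) :
    alohaPowerDensity lam b ν x ≤ lam / √ν * (x ^ (-(1 / 2) : ℝ) * exp (-lam * x)) := by
  have h_rpow : x ^ (-(1 / 2) : ℝ) = (√x)⁻¹ := by rw [rpow_neg hx.le, ← sqrt_eq_rpow]
  have h_split : 1 / √(x * ν) = (√ν)⁻¹ * (√x)⁻¹ := by rw [sqrt_mul hx.le]; field_simp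
  calc alohaPowerDensity lam b ν x
      ≤ (√ν)⁻¹ * x ^ (-(1 / 2) : ℝ) * (lam * exp (-lam * x)) := by
        unfold alohaPowerDensity
        gcongr
        rw [h_split, h_rpow]
        linarith [div_nonneg hb hx.le]
    _ = lam / √ν * (x ^ (-(1 / 2) : ℝ) * exp (-lam * x)) := by ring

lemma integral_alohaPowerDensity_le_exp {lam b ν T L : ℝ} (hlam : 0 < lam) (hb : 0 ≤ b)
    (hT : 0 < T) (hν : 0 < ν) (hTL : T ≤ L) :
    ∫ x in Set.Ioi L, alohaPowerDensity lam b ν x ≤ (√(T * ν))⁻¹ * exp (-lam * T) := by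
  calc ∫ x in Set.Ioi L, alohaPowerDensity lam b ν x
      ≤ ∫ x in Set.Ioi L, (√(T * ν))⁻¹ * (lam * exp (-lam * x)) :=
        setIntegral_le_of_le_of_nonneg measurableSet_Ioi
          (((exp_neg_integrableOn_Ioi L hlam).const_mul lam).const_mul _)
          (fun x _ ↦ by positivity)
          (fun x hx ↦ alohaPowerDensity_le_of_le hlam hb hT hν (hTL.trans (le_of_lt hx)))
    _ = (√(T * ν))⁻¹ * exp (-lam * L) := by
        rw [integral_const_mul, integral_Ioi_mul_exp_neg_mul hlam]
    _ ≤ (√(T * ν))⁻¹ * exp (-lam * T) :=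
        mul_le_mul_of_nonneg_left (exp_le_exp.mpr (by nlinarith)) (by positivity)

lemma integral_alohaPowerDensity_le_sqrt {lam b ν L : ℝ} (hlam : 0 < lam) (hb : 0 ≤ b)
    (hL : 0 ≤ L) :
    ∫ x in Set.Ioi L, alohaPowerDensity lam b ν x ≤ √(lam * π / ν) := by
  set g : ℝ → ℝ := fun x ↦ lam / √ν * (x ^ (-(1 / 2) : ℝ) * exp (-lam * x))
  have hg : IntegrableOn g (Set.Ioi 0) := by
    have h := integrableOn_rpow_mul_exp_neg_mul_rpow (s := -(1 / 2)) (p := 1) (by norm_num)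
      one_pos hlam
    simp only [rpow_one] at h
    exact h.const_mul _
  have hg₀ : ∀ x ∈ Set.Ioi (0 : ℝ), 0 ≤ g x := fun x hx ↦ by
    have : 0 ≤ x ^ (-(1 / 2) : ℝ) := rpow_nonneg (le_of_lt hx) _
    positivity
  have hIoi : Set.Ioi L ⊆ Set.Ioi 0 := Set.Ioi_subset_Ioi hL
  calc ∫ x in Set.Ioi L, alohaPowerDensity lam b ν x
      ≤ ∫ x in Set.Ioi L, g x :=
        setIntegral_le_of_le_of_nonneg measurableSet_Ioi (hg.mono_set hIoi)
          (fun x hx ↦ hg₀ x (hIoi hx))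
          (fun x hx ↦ alohaPowerDensity_le_rpow hlam.le hb (hIoi hx))
    _ ≤ ∫ x in Set.Ioi 0, g x :=
        setIntegral_mono_set hg ((ae_restrict_iff' measurableSet_Ioi).mpr (ae_of_all _ hg₀))
          hIoi.eventuallyLE
    _ = lam / √ν * √(π / lam) := by
        rw [integral_const_mul, integral_Ioi_zero_rpow_neg_half_mul_exp_neg_mul hlam]
    _ = √(lam * π / ν) := by
        rw [sqrt_div' _ hlam.le, sqrt_div (by positivity), sqrt_mul hlam.le]
        field_simp
        rw [sq_sqrt hlam.le]

lemma mul_le_one_of_exp_le_integral_alohaPowerDensity {lam b ν T L : ℝ} (hlam : 0 < lam)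
    (hb : 0 ≤ b) (hT : 0 ≤ T) (hTL : T ≤ L)
    (h : exp (-lam * T) ≤ ∫ x in Set.Ioi L, alohaPowerDensity lam b ν x) :
    T * ν ≤ 1 := by
  by_contra! hTν
  have hT' : 0 < T := lt_of_le_of_ne hT (by rintro rfl; linarith)
  have hν : 0 < ν := pos_of_mul_pos_right (one_pos.trans hTν) hT
  have h_inv : (√(T * ν))⁻¹ < 1 := inv_lt_one_of_one_lt₀ (by rwa [lt_sqrt zero_le_one, one_pow])
  have := h.trans (integral_alohaPowerDensity_le_exp hlam hb hT' hν hTL)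
  nlinarith [exp_pos (-lam * T)]

lemma le_mul_pi_of_one_le_integral_alohaPowerDensity {lam b ν L : ℝ} (hlam : 0 < lam)
    (hb : 0 ≤ b) (hL : 0 ≤ L) (h : 1 ≤ ∫ x in Set.Ioi L, alohaPowerDensity lam b ν x) :
    ν ≤ lam * π := by
  have h_one : 1 ≤ lam * π / ν :=
    one_le_sqrt.mp (h.trans (integral_alohaPowerDensity_le_sqrt hlam hb hL))
  rcases le_or_gt ν 0 with hν | hν
  · linarith [mul_pos hlam pi_pos]
  · rwa [one_le_div hν] at h_one

lemma le_mul_pi_of_log_div_mul_le_one {lam ν x : ℝ} (hlam : 0 < lam) (hx : 2 ≤ x)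
    (h : log x / lam * ν ≤ 1) : ν ≤ lam * π := by
  have hπ : 1 < π * log x := by
    nlinarith [pi_gt_three, log_two_gt_d9, log_le_log two_pos hx]
  rw [div_mul_eq_mul_div, div_le_one hlam] at h
  rcases le_or_gt ν 0 with hν | hν
  · nlinarith [pi_pos]
  · nlinarith [mul_lt_mul_of_pos_left hπ hν, pi_pos]

lemma sq_mul_lt_of_lt_of_mul_le_one {b T ν : ℝ} (hb : 0 ≤ b) (hbT : b < T) (h : T * ν ≤ 1) :
    b ^ 2 * ν < T := by
  nlinarith [mul_le_mul_of_nonneg_left h (sq_nonneg b)]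

theorem aloha_lagrange_bound_general (lam b : ℝ) (hlam : 0 < lam) (hb : 0 < b)
    (ν : ℕ → ℝ)
    (hpower : ∀ M : ℕ, 1 ≤ M →
      (∫ x in Set.Ioi (max (Real.log M / lam) (b ^ 2 * ν M)),
          (1 / Real.sqrt (x * ν M) - b / x) * (lam * Real.exp (-lam * x)))
        = 1 / (M : ℝ)) :
    (∀ M : ℕ, 1 ≤ M → ν M ≤ lam * Real.pi) ∧
    (∃ M₀ : ℕ, ∀ M : ℕ, M₀ ≤ M → b ^ 2 * ν M < Real.log M / lam) := by
  have hpower' : ∀ M : ℕ, 1 ≤ M → ∫ x in Set.Ioi (max (log M / lam) (b ^ 2 * ν M)),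
      alohaPowerDensity lam b (ν M) x = 1 / (M : ℝ) := hpower
  have hT : ∀ M : ℕ, 1 ≤ M → 0 ≤ log M / lam := fun M hM ↦
    div_nonneg (log_nonneg (by exact_mod_cast hM)) hlam.le
  have hTν : ∀ M : ℕ, 1 ≤ M → log M / lam * ν M ≤ 1 := fun M hM ↦
    mul_le_one_of_exp_le_integral_alohaPowerDensity hlam hb.le (hT M hM) (le_max_left _ _) <| by
      have hM₀ : (0 : ℝ) < M := by exact_mod_cast hM
      rw [hpower' M hM, show -lam * (log M / lam) = -log M by field_simp,
        exp_neg, exp_log hM₀, one_div]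
  refine ⟨fun M hM ↦ ?_, ?_⟩
  · rcases hM.eq_or_lt with rfl | hM₂
    · exact le_mul_pi_of_one_le_integral_alohaPowerDensity hlam hb.le
        ((hT 1 le_rfl).trans (le_max_left _ _)) (by rw [hpower' 1 le_rfl]; simp)
    · exact le_mul_pi_of_log_div_mul_le_one hlam (by exact_mod_cast hM₂) (hTν M hM)
  · have hT_tendsto : Tendsto (fun M : ℕ ↦ log M / lam) atTop atTop :=
      (tendsto_log_atTop.comp tendsto_natCast_atTop_atTop).atTop_div_const hlam
    obtain ⟨M₀, hM₀⟩ := eventually_atTop.mp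
      ((hT_tendsto.eventually_gt_atTop b).and (eventually_ge_atTop 1))
    exact ⟨M₀, fun M hM ↦ sq_mul_lt_of_lt_of_mul_le_one hb.le (hM₀ M hM).1 (hTν M (hM₀ M hM).2)⟩

/-- For the channel-aware ALOHA scheme with threshold `T_M = (1/λ)ln M` and
per-sensor average power `1/M` under optimal water-filling power allocation,
the Lagrange multipliers `ν_M` determined by
`∫_{max(T_M, b²ν_M)}^∞ (1/√(xν_M) − b/x) λe^{-λx} dx = 1/M`
satisfy `ν_M ≤ λπ` for every `M`, and consequently `T_M > b²ν_M` for all `M`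
sufficiently large. -/
theorem aloha_lagrange_bound (lam b : ℝ) (hlam : 0 < lam) (hb : 0 < b)
    (ν : ℕ → ℝ) (hν : ∀ M : ℕ, 1 ≤ M → 0 < ν M)
    (hpower : ∀ M : ℕ, 1 ≤ M →
      (∫ x in Set.Ioi (max (Real.log M / lam) (b ^ 2 * ν M)),
          (1 / Real.sqrt (x * ν M) - b / x) * (lam * Real.exp (-lam * x)))
        = 1 / (M : ℝ)) :
    (∀ M : ℕ, 1 ≤ M → ν M ≤ lam * Real.pi) ∧
    (∃ M₀ : ℕ, ∀ M : ℕ, M₀ ≤ M → b ^ 2 * ν M < Real.log M / lam) :=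
  aloha_lagrange_bound_general lam b hlam hb ν hpower
end

section
/- Let σθ² > 0, σv² > 0, σn² > 0, λ > 0, set A = σθ²σv²/(σθ²+σv²) and L = σθ²(1 − 1/e) + A/e. For an integer M ≥ 2 and T > 0 define F_M(T) = σθ²·[1 − M e^{−λT}(1 − e^{−λT})^{M−1}] + M(1 − e^{−λT})^{M−1} · ∫_T^∞ (1/σθ² + (x e^{λT}/M)/((x σv² e^{λT}/M) + σn²))^{−1} λ e^{−λx} dx. Then: (i) for every M ≥ 2 and every T > 0, F_M(T) ≥ σθ²·[1 − (1 − 1/M)^{M−1}] + (1 − 1/M)^{M−1}·A; and (ii) if for each M ≥ 2, T*_M > 0 is a minimizer of F_M over (0,∞), then F_M(T*_M) → L as M → ∞, with F_M(T*_M) ≤ F_M((1/λ)ln(M)) so that the convergence to L is at least as fast as 1/ln(M). -/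
/-!
With `u = e^{-λT}`, `F_M(T) = σθ²(1 - M u (1-u)^{M-1}) + M (1-u)^{M-1} I`, where `I` is the
exponential-tail average of the single-transmission distortion `mmse`. Since `mmse` decreases from
its value at the threshold towards `A`, `A u ≤ I ≤ mmse(T e^{λT}/M) u`. The probability that exactly
one sensor transmits satisfies `M u (1-u)^{M-1} ≤ p_M := (1-1/M)^{M-1}`, which gives (i).
At `T = ln M / λ` the power normalisation is `1` and `u = 1/M`, so
`F_M(T) ≤ σθ²(1 - p_M) + p_M mmse(T)`. As `p_M → 1/e` and `mmse(s) → A` when `s → ∞`, both bounds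
tend to `L` and squeeze `F_M(T*_M)`.
-/

open MeasureTheory Filter Real Set Topology

/-- Distortion of the estimate of `θ` from a single transmission received with effective
gain `s = α² x`. -/
noncomputable def mmse (sθ sv sn s : ℝ) : ℝ := (1 / sθ + s / (s * sv + sn))⁻¹

section Mmse

variable {sθ sv sn : ℝ}

theorem measurable_mmse : Measurable (mmse sθ sv sn) := by
  unfold mmse; fun_prop

theorem mmse_antitoneOn (hθ : 0 < sθ) (hv : 0 < sv) (hn : 0 < sn) :
    AntitoneOn (mmse sθ sv sn) (Ici 0) := by
  intro s (hs : 0 ≤ s) t (ht : 0 ≤ t) hst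
  unfold mmse
  gcongr (1 / sθ + ?_)⁻¹
  rw [div_le_div_iff₀ (by positivity) (by positivity)]
  nlinarith

theorem one_div_add_one_div_inv (hθ : 0 < sθ) (hv : 0 < sv) :
    (1 / sθ + 1 / sv)⁻¹ = sθ * sv / (sθ + sv) := by
  field_simp; ring

theorem div_le_mmse (hθ : 0 < sθ) (hv : 0 < sv) (hn : 0 < sn) {s : ℝ} (hs : 0 ≤ s) :
    sθ * sv / (sθ + sv) ≤ mmse sθ sv sn s := by
  rw [← one_div_add_one_div_inv hθ hv, mmse]
  gcongr (1 / sθ + ?_)⁻¹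
  rw [div_le_div_iff₀ (by positivity) hv]
  nlinarith

theorem tendsto_mmse_atTop (hθ : 0 < sθ) (hv : 0 < sv) :
    Tendsto (mmse sθ sv sn) atTop (𝓝 (sθ * sv / (sθ + sv))) := by
  have hgain : Tendsto (fun s => (sv + sn / s)⁻¹) atTop (𝓝 (1 / sv)) := by
    simpa using (tendsto_const_nhds.add (tendsto_const_nhds.div_atTop tendsto_id)).inv₀
      (by simpa using hv.ne' : sv + 0 ≠ 0)
  rw [← one_div_add_one_div_inv hθ hv]
  refine ((tendsto_const_nhds.add hgain).inv₀ (by positivity)).congr' ?_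
  filter_upwards [eventually_gt_atTop 0] with s hs
  rw [mmse, show s * sv + sn = s * (sv + sn / s) by field_simp, div_mul_cancel_left₀ hs.ne']

end Mmse

theorem mul_mul_one_sub_pow_le_one_sub_inv_pow {M : ℕ} (hM : 2 ≤ M) {u : ℝ} (hu : u ≤ 1) :
    M * u * (1 - u) ^ (M - 1) ≤ (1 - 1 / (M : ℝ)) ^ (M - 1) := by
  have hM' : (2 : ℝ) ≤ M := by exact_mod_cast hM
  have hq : 0 < 1 - 1 / (M : ℝ) := by
    rw [sub_pos, div_lt_one] <;> linarith
  set r := (1 - u) / (1 - 1 / (M : ℝ))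
  have hr : 0 ≤ r := div_nonneg (by linarith) hq.le
  -- `x ≤ exp (x - 1)` applied to `M u` and to `r`; the exponents cancel.
  have hcancel : M * u - 1 + ((M - 1 : ℕ) : ℝ) * (r - 1) = 0 := by
    rw [Nat.cast_sub (by omega), Nat.cast_one]
    have hM1 : (M : ℝ) - 1 ≠ 0 := by linarith
    simp only [r]
    field_simp
    ring
  have hprod : M * u * r ^ (M - 1) ≤ 1 :=
    calc M * u * r ^ (M - 1) ≤ exp (M * u - 1) * exp (r - 1) ^ (M - 1) := by
          gcongr
          · linarith [add_one_le_exp (M * u - 1)]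
          · linarith [add_one_le_exp (r - 1)]
      _ = 1 := by rw [← exp_nat_mul, ← exp_add, hcancel, exp_zero]
  calc M * u * (1 - u) ^ (M - 1) = (1 - 1 / (M : ℝ)) ^ (M - 1) * (M * u * r ^ (M - 1)) := by
        rw [show 1 - u = (1 - 1 / (M : ℝ)) * r from (mul_div_cancel₀ _ hq.ne').symm, mul_pow]
        ring
    _ ≤ (1 - 1 / (M : ℝ)) ^ (M - 1) := mul_le_of_le_one_right (by positivity) hprod

theorem tendsto_one_sub_inv_pow_pred :
    Tendsto (fun M : ℕ => (1 - 1 / (M : ℝ)) ^ (M - 1)) atTop (𝓝 (exp (-1))) := by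
  have h := (tendsto_one_add_div_pow_exp (-1)).div
    (tendsto_const_nhds.add (tendsto_const_div_atTop_nhds_zero_nat (-1 : ℝ))) 
    (by norm_num : (1 : ℝ) + 0 ≠ 0)
  rw [add_zero, div_one] at h
  refine h.congr' ?_
  filter_upwards [eventually_ge_atTop 2] with M hM
  have hM' : (2 : ℝ) ≤ M := by exact_mod_cast hM
  have hne : (1 : ℝ) + -1 / M ≠ 0 := by
    rw [neg_div, ← sub_eq_add_neg, sub_ne_zero, ne_eq, eq_div_iff] <;> linarith
  rw [Pi.div_apply, div_eq_iff hne, ← pow_sub_one_mul (by omega : M ≠ 0), neg_div, ← sub_eq_add_neg]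

theorem tendsto_mix_one_sub_inv_pow_pred (s : ℝ) {a : ℕ → ℝ} {A : ℝ}
    (ha : Tendsto a atTop (𝓝 A)) :
    Tendsto (fun M : ℕ => s * (1 - (1 - 1 / (M : ℝ)) ^ (M - 1)) + (1 - 1 / (M : ℝ)) ^ (M - 1) * a M)
      atTop (𝓝 (s * (1 - 1 / exp 1) + A / exp 1)) := by
  convert ((tendsto_const_nhds.sub tendsto_one_sub_inv_pow_pred).const_mul s).add
    (tendsto_one_sub_inv_pow_pred.mul ha) using 2
  rw [exp_neg]; ring

section ExponentialTail

variable {lam : ℝ}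

theorem integrableOn_exponential_density_Ioi (hlam : 0 < lam) (T : ℝ) :
    IntegrableOn (fun x => lam * exp (-lam * x)) (Ioi T) :=
  (integrableOn_exp_mul_Ioi (neg_lt_zero.2 hlam) T).const_mul lam

theorem integral_exponential_density_Ioi (hlam : 0 < lam) (T : ℝ) :
    ∫ x in Ioi T, lam * exp (-lam * x) = exp (-lam * T) := by
  rw [integral_const_mul, integral_exp_mul_Ioi (neg_lt_zero.2 hlam)]
  field_simp

theorem integral_mul_exponential_density_mem_Icc (hlam : 0 < lam) {T a b : ℝ} {f : ℝ → ℝ}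
    (hf : AEStronglyMeasurable f (volume.restrict (Ioi T))) (hfab : ∀ x ∈ Ioi T, f x ∈ Icc a b) :
    ∫ x in Ioi T, f x * (lam * exp (-lam * x)) ∈ Icc (a * exp (-lam * T)) (b * exp (-lam * T)) := by
  have hdens := integrableOn_exponential_density_Ioi hlam T
  have hint : IntegrableOn (fun x => f x * (lam * exp (-lam * x))) (Ioi T) := by
    refine hdens.bdd_mul hf (c := max |a| |b|) ?_
    filter_upwards [self_mem_ae_restrict measurableSet_Ioi] with x hx
    exact abs_le_max_abs_abs (hfab x hx).1 (hfab x hx).2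
  rw [← integral_exponential_density_Ioi hlam T, ← integral_const_mul, ← integral_const_mul]
  constructor
  · refine setIntegral_mono_on (hdens.const_mul a) hint measurableSet_Ioi fun x hx => ?_
    exact mul_le_mul_of_nonneg_right (hfab x hx).1 (by positivity)
  · refine setIntegral_mono_on hint (hdens.const_mul b) measurableSet_Ioi fun x hx => ?_
    exact mul_le_mul_of_nonneg_right (hfab x hx).2 (by positivity)

end ExponentialTail

theorem integral_mmse_mem_Icc {sθ sv sn lam : ℝ} (hθ : 0 < sθ) (hv : 0 < sv) (hn : 0 < sn)
    (hlam : 0 < lam) {T c : ℝ} (hT : 0 ≤ T) (hc : 0 ≤ c) :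
    ∫ x in Ioi T, mmse sθ sv sn (x * c) * (lam * exp (-lam * x)) ∈
      Icc (sθ * sv / (sθ + sv) * exp (-lam * T)) (mmse sθ sv sn (T * c) * exp (-lam * T)) := by
  refine integral_mul_exponential_density_mem_Icc hlam
    (measurable_mmse.comp (measurable_id.mul_const c)).aestronglyMeasurable fun x hx => ?_
  have hTx : T * c ≤ x * c := mul_le_mul_of_nonneg_right hx.le hc
  have hTc : 0 ≤ T * c := mul_nonneg hT hc
  exact ⟨div_le_mmse hθ hv hn (hTc.trans hTx),
    mmse_antitoneOn hθ hv hn hTc (hTc.trans hTx) hTx⟩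

/-- The paper's `F_M(T)`, with the normalised power `α² = e^{λT}/M`. -/
noncomputable def alohaDistortion (sθ sv sn lam : ℝ) (M : ℕ) (T : ℝ) : ℝ :=
  sθ * (1 - M * exp (-lam * T) * (1 - exp (-lam * T)) ^ (M - 1))
    + M * (1 - exp (-lam * T)) ^ (M - 1) *
      ∫ x in Ioi T, mmse sθ sv sn (x * (exp (lam * T) / M)) * (lam * exp (-lam * x))

section Aloha

variable {sθ sv sn lam : ℝ} {M : ℕ}

theorem le_alohaDistortion (hθ : 0 < sθ) (hv : 0 < sv) (hn : 0 < sn) (hlam : 0 < lam)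
    (hM : 2 ≤ M) {T : ℝ} (hT : 0 ≤ T) :
    sθ * (1 - (1 - 1 / (M : ℝ)) ^ (M - 1)) + (1 - 1 / (M : ℝ)) ^ (M - 1) * (sθ * sv / (sθ + sv))
      ≤ alohaDistortion sθ sv sn lam M T := by
  have hu : exp (-lam * T) ≤ 1 := exp_le_one_iff.2 (by nlinarith)
  have hsingle := mul_mul_one_sub_pow_le_one_sub_inv_pow hM hu
  obtain ⟨hI, -⟩ := integral_mmse_mem_Icc hθ hv hn hlam hT (c := exp (lam * T) / M) (by positivity)
  have hA : sθ * sv / (sθ + sv) ≤ sθ := by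
    rw [div_le_iff₀ (by positivity)]; nlinarith
  have hq : 0 ≤ (M : ℝ) * (1 - exp (-lam * T)) ^ (M - 1) := by
    have := sub_nonneg.2 hu; positivity
  -- `F - bound = (σθ² - A) (p_M - M u (1-u)^{M-1}) + M (1-u)^{M-1} (I - A u)`
  unfold alohaDistortion
  linarith [mul_le_mul_of_nonneg_left hsingle (sub_nonneg.2 hA), mul_le_mul_of_nonneg_left hI hq]

theorem alohaDistortion_log_div_le (hθ : 0 < sθ) (hv : 0 < sv) (hn : 0 < sn) (hlam : 0 < lam)
    (hM : 0 < M) :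
    alohaDistortion sθ sv sn lam M (log M / lam)
      ≤ sθ * (1 - (1 - 1 / (M : ℝ)) ^ (M - 1))
        + (1 - 1 / (M : ℝ)) ^ (M - 1) * mmse sθ sv sn (log M / lam) := by
  have hM' : (0 : ℝ) < M := by exact_mod_cast hM
  have hT : 0 ≤ log M / lam := div_nonneg (log_natCast_nonneg M) hlam.le
  have hexp : exp (lam * (log M / lam)) = M := by
    rw [mul_div_cancel₀ _ hlam.ne', exp_log hM']
  have hu : exp (-lam * (log M / lam)) = 1 / M := by
    rw [neg_mul, exp_neg, hexp, one_div]
  obtain ⟨-, hI⟩ := integral_mmse_mem_Icc hθ hv hn hlam hT (c := 1) zero_le_one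
  rw [alohaDistortion, hexp, div_self hM'.ne', hu]
  rw [mul_one, hu] at hI
  have hq : 0 ≤ (1 - 1 / (M : ℝ)) ^ (M - 1) := by
    have : 1 / (M : ℝ) ≤ 1 := by rw [div_le_one hM']; exact_mod_cast hM
    have := sub_nonneg.2 this; positivity
  have hMI := mul_le_mul_of_nonneg_left hI (mul_nonneg hM'.le hq)
  field_simp at hMI ⊢
  linarith

end Aloha

/-- Bounds for the channel-aware ALOHA scheme with optimized transmission
threshold under constant (normalized) power allocation: with
`A = σθ²σv²/(σθ²+σv²)` and `L = σθ²(1-1/e) + A/e`,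
(i) for every `M ≥ 2` and `T > 0`,
`F_M(T) ≥ σθ²[1 − (1-1/M)^{M-1}] + (1-1/M)^{M-1}A`;
(ii) if `T*_M > 0` minimizes `F_M` over `(0,∞)`, then `F_M(T*_M) → L` as
`M → ∞`, and `F_M(T*_M) ≤ F_M((1/λ)ln M)`. -/
theorem optimal_threshold_distortion_bounds (sθ sv sn lam : ℝ)
    (hθ : 0 < sθ) (hv : 0 < sv) (hn : 0 < sn) (hlam : 0 < lam)
    (A L : ℝ) (hA : A = sθ * sv / (sθ + sv))
    (hL : L = sθ * (1 - 1 / Real.exp 1) + A / Real.exp 1)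
    (F : ℕ → ℝ → ℝ)
    (hF : ∀ M : ℕ, 2 ≤ M → ∀ T : ℝ, 0 < T →
      F M T = sθ * (1 - (M : ℝ) * Real.exp (-lam * T)
          * (1 - Real.exp (-lam * T)) ^ (M - 1))
        + (M : ℝ) * (1 - Real.exp (-lam * T)) ^ (M - 1) *
          ∫ x in Set.Ioi T,
            (1 / sθ + (x * Real.exp (lam * T) / M) /
              (x * sv * Real.exp (lam * T) / M + sn))⁻¹
              * (lam * Real.exp (-lam * x))) :
    (∀ M : ℕ, 2 ≤ M → ∀ T : ℝ, 0 < T →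
      sθ * (1 - (1 - 1 / (M : ℝ)) ^ (M - 1)) + (1 - 1 / (M : ℝ)) ^ (M - 1) * A
        ≤ F M T) ∧
    (∀ Ts : ℕ → ℝ, (∀ M : ℕ, 2 ≤ M → 0 < Ts M) →
      (∀ M : ℕ, 2 ≤ M → ∀ T : ℝ, 0 < T → F M (Ts M) ≤ F M T) →
      Tendsto (fun M : ℕ => F M (Ts M)) atTop (nhds L) ∧
        ∀ M : ℕ, 2 ≤ M → F M (Ts M) ≤ F M (Real.log M / lam)) := by
  subst hA hL
  have hF' : ∀ M : ℕ, 2 ≤ M → ∀ T : ℝ, 0 < T → F M T = alohaDistortion sθ sv sn lam M T := by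
    intro M hM T hT
    rw [hF M hM T hT, alohaDistortion]
    congr 3 with x
    rw [mmse]
    ring
  have hlog : ∀ M : ℕ, 2 ≤ M → 0 < log M / lam := fun M hM =>
    div_pos (log_pos (by exact_mod_cast hM)) hlam
  have hlower : ∀ M : ℕ, 2 ≤ M → ∀ T : ℝ, 0 < T →
      sθ * (1 - (1 - 1 / (M : ℝ)) ^ (M - 1)) + (1 - 1 / (M : ℝ)) ^ (M - 1) * (sθ * sv / (sθ + sv))
        ≤ F M T := fun M hM T hT =>
    (le_alohaDistortion hθ hv hn hlam hM hT.le).trans_eq (hF' M hM T hT).symm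
  refine ⟨hlower, fun Ts hTs hmin => ⟨?_, fun M hM => hmin M hM _ (hlog M hM)⟩⟩
  have hmmse : Tendsto (fun M : ℕ => mmse sθ sv sn (log M / lam)) atTop
      (𝓝 (sθ * sv / (sθ + sv))) := (tendsto_mmse_atTop hθ hv).comp
    ((tendsto_log_atTop.comp tendsto_natCast_atTop_atTop).atTop_div_const hlam)
  refine tendsto_of_tendsto_of_tendsto_of_le_of_le'
    (tendsto_mix_one_sub_inv_pow_pred sθ tendsto_const_nhds)
    (tendsto_mix_one_sub_inv_pow_pred sθ hmmse) ?_ ?_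
  · filter_upwards [eventually_ge_atTop 2] with M hM using hlower M hM _ (hTs M hM)
  · filter_upwards [eventually_ge_atTop 2] with M hM
    exact (hmin M hM _ (hlog M hM)).trans ((hF' M hM _ (hlog M hM)).trans_le
      (alohaDistortion_log_div_le hθ hv hn hlam (by omega)))
end
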